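/- For every α ∈ (0,1) and every integer k ≥ 3, one has sin((1−α)π/2) ≥ ((1−α)π/(2k))^α; equivalently, (2k)^α ≥ ((1−α)π)^α / sin((1−α)π/2). -/

import Mathlib

open Real

/-! With `β = 1 - α`, weighted AM–GM (Bernoulli) gives
`(βπ/6)^α ≤ α · βπ/6 + β`, and this concave quadratic in `β` stays below `sin (βπ/2)` on `[0, 1]`:
near `0` by `sin x ≥ x - x³/6`, near `1` by `cos y ≥ 1 - y²/2`. The bound for `k ≥ 3` then follows
since `2k ≥ 6`. -/

lemma add_mul_le_sin_mul_pi_div_two_of_le_half {β : ℝ} (h0 : 0 ≤ β) (hβ : β ≤ 1 / 2) :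
    β + (1 - β) * (β * π / 6) ≤ sin (β * π / 2) := by
  have hsin := sin_ge_sub_cube (x := β * π / 2) (by positivity)
  have hπ : π ^ 3 < 32 :=
    (pow_lt_pow_left₀ pi_lt_d2 pi_pos.le three_ne_zero).trans (by norm_num)
  have hcoef : 0 ≤ π / 6 - β * π ^ 3 / 48 := by nlinarith [pi_gt_three]
  have hquad : 0 ≤ β * (π / 3 - 1 + β * (π / 6 - β * π ^ 3 / 48)) :=
    mul_nonneg h0 (by nlinarith [pi_gt_three, mul_nonneg h0 hcoef])
  linear_combination hsin + hquad

lemma add_mul_le_sin_mul_pi_div_two_of_half_le {β : ℝ} (hβ : 1 / 2 ≤ β) (h1 : β ≤ 1) :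
    β + (1 - β) * (β * π / 6) ≤ sin (β * π / 2) := by
  have hcos := one_sub_sq_div_two_le_cos (x := (1 - β) * π / 2)
  have hsin : sin (β * π / 2) = cos ((1 - β) * π / 2) := by
    rw [← sin_pi_div_two_sub]; ring_nf
  have hπ : π ^ 2 < 3.15 ^ 2 := pow_lt_pow_left₀ pi_lt_d2 pi_pos.le two_ne_zero
  have hcoef : 0 ≤ 1 - π / 6 - (1 - β) * (π ^ 2 / 8 - π / 6) := by
    have hslope : 0 ≤ π ^ 2 / 8 - π / 6 := by nlinarith [pi_gt_three]
    nlinarith [mul_le_mul_of_nonneg_right (show 1 - β ≤ 1 / 2 by linarith) hslope]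
  have hquad : 0 ≤ (1 - β) * (1 - π / 6 - (1 - β) * (π ^ 2 / 8 - π / 6)) :=
    mul_nonneg (by linarith) hcoef
  rw [hsin]
  linear_combination hcos + hquad

lemma add_mul_le_sin_mul_pi_div_two {β : ℝ} (h0 : 0 ≤ β) (h1 : β ≤ 1) :
    β + (1 - β) * (β * π / 6) ≤ sin (β * π / 2) := by
  rcases le_total β (1 / 2) with hβ | hβ
  · exact add_mul_le_sin_mul_pi_div_two_of_le_half h0 hβ
  · exact add_mul_le_sin_mul_pi_div_two_of_half_le hβ h1

lemma rpow_le_one_add_mul_sub_one {x p : ℝ} (hx : 0 ≤ x) (hp0 : 0 ≤ p) (hp1 : p ≤ 1) :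
    x ^ p ≤ 1 + p * (x - 1) := by
  simpa using rpow_one_add_le_one_add_mul_self (s := x - 1) (by linarith) hp0 hp1

lemma rpow_le_sin_one_sub_mul_pi_div_two {α : ℝ} (h0 : 0 ≤ α) (h1 : α ≤ 1) :
    ((1 - α) * π / 6) ^ α ≤ sin ((1 - α) * π / 2) :=
  calc ((1 - α) * π / 6) ^ α
      ≤ 1 + α * ((1 - α) * π / 6 - 1) :=
        rpow_le_one_add_mul_sub_one (by nlinarith [pi_pos]) h0 h1
    _ = (1 - α) + (1 - (1 - α)) * ((1 - α) * π / 6) := by ring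
    _ ≤ sin ((1 - α) * π / 2) := add_mul_le_sin_mul_pi_div_two (by linarith) (by linarith)

theorem gl_line_k3_below (α : ℝ) (hα : α ∈ Set.Ioo (0:ℝ) 1) (k : ℕ) (hk : 3 ≤ k) :
    Real.sin ((1 - α) * π / 2) ≥ ((1 - α) * π / (2 * (k:ℝ))) ^ α ∧
      (2 * (k:ℝ)) ^ α ≥ ((1 - α) * π) ^ α / Real.sin ((1 - α) * π / 2) := by
  obtain ⟨hα0, hα1⟩ := hα
  have hk6 : (6 : ℝ) ≤ 2 * k := by
    have : (3 : ℝ) ≤ k := by exact_mod_cast hk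
    linarith
  have hβπ : 0 ≤ (1 - α) * π := by nlinarith [pi_pos]
  have hbound : ((1 - α) * π / (2 * k)) ^ α ≤ sin ((1 - α) * π / 2) :=
    calc ((1 - α) * π / (2 * k)) ^ α
        ≤ ((1 - α) * π / 6) ^ α := by gcongr
      _ ≤ sin ((1 - α) * π / 2) := rpow_le_sin_one_sub_mul_pi_div_two hα0.le hα1.le
  refine ⟨hbound, ?_⟩
  have hsin : 0 < sin ((1 - α) * π / 2) :=
    sin_pos_of_pos_of_lt_pi (by nlinarith [pi_pos]) (by nlinarith [pi_pos])
  rw [div_rpow hβπ (by linarith), div_le_iff₀ (by positivity)] at hbound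
  rw [ge_iff_le, div_le_iff₀ hsin]
  exact hbound.trans_eq (mul_comm _ _)
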